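/- arXiv:2303.17172 — 4 statements merged into one kernel-verified Lean document; each statement's English description precedes it below -/
import Mathlib

section
/- Let M be a spanning multiset of points of cardinality n in PG(k-1,q) such that every hyperplane H satisfies M(H) = s. Then every point P satisfies M(P) = t where t = n/[k]_q with [k]_q = (q^k-1)/(q-1); moreover if k ≥ 2 then s = t·[k-1]_q. -/
open scoped Classical

noncomputable def MVal {F V : Type*} [Field F] [AddCommGroup V] [Module F V]
    (M : Projectivization F V → ℕ) (K : Submodule F V) : ℕ :=
  ∑ᶠ P ∈ {P : Projectivization F V | P.submodule ≤ K}, M P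

def IsDivisible {F V : Type*} [Field F] [AddCommGroup V] [Module F V] (Δ : ℕ)
    (M : Projectivization F V → ℕ) : Prop :=
  ∀ H : Submodule F V, Module.finrank F H + 1 = Module.finrank F V →
    MVal M H ≡ MVal M ⊤ [MOD Δ]

def IsSpanning {F V : Type*} [Field F] [AddCommGroup V] [Module F V]
    (M : Projectivization F V → ℕ) : Prop :=
  (⨆ P ∈ {P : Projectivization F V | 0 < M P}, P.submodule) = ⊤

def gaussNum (q k : ℕ) : ℕ := ∑ i ∈ Finset.range k, q ^ i

def IsProjBase {F V : Type*} [Field F] [AddCommGroup V] [Module F V]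
    (n : ℕ) (B : Finset (Projectivization F V)) : Prop :=
  B.card = n ∧ ∀ T ⊆ B, T.card = n - 1 →
    Module.finrank F ((⨆ P ∈ T, Projectivization.submodule P) : Submodule F V) = n - 1


/-! Fix a point `P` and sum `M(H)` over the kernels `H` of the functionals `φ` vanishing on `P`.
The `q^(k-1) - 1` nonzero ones give hyperplanes through `P`, each of weight `s`, and `φ = 0`
gives the whole space, of weight `n`. A point lies in `q^(k-1)` of these kernels if it is `P` and
in `q^(k-2)` otherwise, so `M(P) (q^(k-1) - q^(k-2)) = n + (q^(k-1) - 1) s - n q^(k-2)` does not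
depend on `P`. Hence `M` is constant, and counting the points of the space and of a hyperplane
gives `n` and `s`. -/

open Module Projectivization
open scoped LinearAlgebra.Projectivization

section DivisionRing

variable {F V : Type*} [DivisionRing F] [AddCommGroup V] [Module F V]

lemma Projectivization.range_map_subtype (K : Submodule F V) :
    Set.range (map K.subtype K.injective_subtype) = {P : ℙ F V | P.submodule ≤ K} := by
  ext P
  induction P using Projectivization.ind with | h v hv =>
  simp only [Set.mem_range, Set.mem_ofPred_eq, submodule_mk, Submodule.span_singleton_le_iff_mem]
  constructor
  · rintro ⟨x, hx⟩
    induction x using Projectivization.ind with | h w hw =>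
    obtain ⟨a, rfl⟩ := (mk_eq_mk_iff' F v _ hv _).1 hx.symm
    exact K.smul_mem a w.2
  · intro h
    exact ⟨mk F ⟨v, h⟩ (by simpa using hv), rfl⟩

lemma Projectivization.finrank_sup_submodule_of_ne {P Q : ℙ F V} (h : P ≠ Q) :
    finrank F ↥(P.submodule ⊔ Q.submodule) = 2 := by
  have h₂ := finrank_span_eq_card (linearIndependent_pair_iff_ne.2 h)
  rw [Fintype.card_fin, Matrix.range_cons_cons_empty, Submodule.span_insert, ← submodule_eq,
    ← submodule_eq] at h₂
  exact h₂

lemma Projectivization.subsingleton_of_finrank_le_one [FiniteDimensional F V]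
    (h : finrank F V ≤ 1) : Subsingleton (ℙ F V) := by
  have htop (P : ℙ F V) : P.submodule = ⊤ :=
    Submodule.eq_top_of_finrank_eq (le_antisymm (Submodule.finrank_le _)
      (h.trans_eq P.finrank_submodule.symm))
  exact ⟨fun P Q => submodule_injective ((htop P).trans (htop Q).symm)⟩

end DivisionRing

section FiniteField

variable {F V : Type*} [Field F] [AddCommGroup V] [Module F V]

lemma MVal_eq_sum_ite [Fintype (ℙ F V)] (M : ℙ F V → ℕ) (K : Submodule F V) :
    MVal M K = ∑ P, if P.submodule ≤ K then M P else 0 := by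
  rw [MVal, finsum_mem_def, finsum_eq_sum_of_fintype]
  rfl

variable [Fintype F]

lemma natCard_setOf_submodule_le (K : Submodule F V) :
    Nat.card {P : ℙ F V | P.submodule ≤ K} = gaussNum (Fintype.card F) (finrank F K) := by
  rw [← range_map_subtype, ← Nat.card_congr (Equiv.ofInjective _ (map_injective _ _)),
    card_of_finrank F K rfl, Nat.card_eq_fintype_card, gaussNum]

variable [FiniteDimensional F V]

lemma MVal_eq_mul_of_forall_eq {M : ℙ F V → ℕ} {t : ℕ} (hM : ∀ P, M P = t)
    (K : Submodule F V) : MVal M K = t * gaussNum (Fintype.card F) (finrank F K) := by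
  have : Finite V := Module.finite_of_finite F
  rw [MVal, finsum_mem_eq_finite_toFinset_sum _ (Set.toFinite _)]
  simp only [hM, Finset.sum_const, smul_eq_mul]
  rw [← Set.ncard_eq_toFinset_card, ← Nat.card_coe_set_eq, natCard_setOf_submodule_le,
    mul_comm]

lemma natCard_dualAnnihilator (W : Submodule F V) :
    Nat.card W.dualAnnihilator = Fintype.card F ^ (finrank F V - finrank F W) := by
  rw [Module.natCard_eq_pow_finrank (K := F), Nat.card_eq_fintype_card,
    ← Subspace.finrank_add_finrank_dualAnnihilator_eq W, Nat.add_sub_cancel_left]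

lemma sum_MVal_ker_dualAnnihilator [Fintype (ℙ F V)] [Fintype (Dual F V)]
    (M : ℙ F V → ℕ) (W : Submodule F V) :
    ∑ φ ∈ Finset.univ.filter (· ∈ W.dualAnnihilator), MVal M (LinearMap.ker φ) =
      ∑ P, Fintype.card F ^ (finrank F V - finrank F ↥(W ⊔ P.submodule)) * M P := by
  simp_rw [MVal_eq_sum_ite]
  rw [Finset.sum_comm]
  refine Finset.sum_congr rfl fun P _ => ?_
  rw [← Finset.sum_filter, Finset.sum_const, smul_eq_mul, Finset.filter_filter,
    ← natCard_dualAnnihilator, Submodule.dualAnnihilator_sup_eq, ← Nat.card_eq_finsetCard]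
  congr 1
  refine Nat.card_congr (Equiv.subtypeEquivRight fun φ => ?_)
  simp [Submodule.mem_dualAnnihilator, SetLike.le_def]

lemma mul_pow_sub_pow_add_MVal_top_eq {M : ℙ F V → ℕ} {s : ℕ}
    (hH : ∀ H : Submodule F V, finrank F H + 1 = finrank F V → MVal M H = s)
    (hk : 2 ≤ finrank F V) (P₀ : ℙ F V) :
    M P₀ * (Fintype.card F ^ (finrank F V - 1) - Fintype.card F ^ (finrank F V - 2)) +
        MVal M ⊤ * Fintype.card F ^ (finrank F V - 2) =
      MVal M ⊤ + (Fintype.card F ^ (finrank F V - 1) - 1) * s := by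
  have : Finite V := Module.finite_of_finite F
  have := Fintype.ofFinite (ℙ F V)
  have : Finite (Dual F V) := Module.finite_of_finite F
  have := Fintype.ofFinite (Dual F V)
  set A := Finset.univ.filter (· ∈ P₀.submodule.dualAnnihilator)
  have hzero : (0 : Dual F V) ∈ A := by simp [A]
  have hA : A.card = Fintype.card F ^ (finrank F V - 1) := by
    rw [← finrank_submodule P₀, ← natCard_dualAnnihilator, ← Nat.card_eq_finsetCard]
    exact Nat.card_congr (Equiv.subtypeEquivRight fun φ => by simp [A])
  have hkernels : ∑ φ ∈ A, MVal M (LinearMap.ker φ) =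
      MVal M ⊤ + (Fintype.card F ^ (finrank F V - 1) - 1) * s := by
    rw [← Finset.add_sum_erase _ _ hzero, LinearMap.ker_zero,
      Finset.sum_congr rfl fun φ hφ => hH _ (Dual.finrank_ker_add_one_of_ne_zero
        (Finset.ne_of_mem_erase hφ)), Finset.sum_const, Finset.card_erase_of_mem hzero, hA,
      smul_eq_mul]
  have hpoints :
      ∑ P, Fintype.card F ^ (finrank F V - finrank F ↥(P₀.submodule ⊔ P.submodule)) * M P =
        Fintype.card F ^ (finrank F V - 1) * M P₀ +
          Fintype.card F ^ (finrank F V - 2) * ∑ P ∈ Finset.univ.erase P₀, M P := by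
    rw [← Finset.add_sum_erase _ _ (Finset.mem_univ P₀), sup_idem, finrank_submodule,
      Finset.mul_sum]
    congr 1
    refine Finset.sum_congr rfl fun P hP => ?_
    rw [finrank_sup_submodule_of_ne (Finset.ne_of_mem_erase hP).symm]
  have hcount := sum_MVal_ker_dualAnnihilator M P₀.submodule
  rw [hkernels, hpoints] at hcount
  have hn : MVal M ⊤ = M P₀ + ∑ P ∈ Finset.univ.erase P₀, M P := by
    simp only [MVal_eq_sum_ite, le_top, ite_true, Finset.add_sum_erase _ _ (Finset.mem_univ P₀)]
  have hpow : Fintype.card F ^ (finrank F V - 2) ≤ Fintype.card F ^ (finrank F V - 1) :=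
    Nat.pow_le_pow_right Fintype.card_pos (by omega)
  rw [hcount, hn]
  zify [hpow]
  ring

lemma eq_of_MVal_hyperplane_eq {M : ℙ F V → ℕ} {s : ℕ}
    (hH : ∀ H : Submodule F V, finrank F H + 1 = finrank F V → MVal M H = s) (P Q : ℙ F V) :
    M P = M Q := by
  rcases le_or_gt (finrank F V) 1 with hk | hk
  · have := subsingleton_of_finrank_le_one hk
    rw [Subsingleton.elim P Q]
  have hP := mul_pow_sub_pow_add_MVal_top_eq hH hk P
  rw [← mul_pow_sub_pow_add_MVal_top_eq hH hk Q, Nat.add_right_cancel_iff] at hP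
  refine Nat.eq_of_mul_eq_mul_right (Nat.sub_pos_of_lt ?_) hP
  exact Nat.pow_lt_pow_right Fintype.one_lt_card (by omega)

end FiniteField

theorem stmt_1_general {F : Type*} [Field F] [Fintype F] (q k n s : ℕ)
    (hq : Fintype.card F = q)
    (M : Projectivization F (Fin k → F) → ℕ)
    (hn : MVal M ⊤ = n)
    (hH : ∀ H : Submodule F (Fin k → F), Module.finrank F H + 1 = k → MVal M H = s) :
    ∃ t : ℕ, n = t * gaussNum q k ∧ (∀ P, M P = t) ∧
      (2 ≤ k → s = t * gaussNum q (k - 1)) := by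
  subst hq
  have hdim : finrank F (Fin k → F) = k := finrank_fin_fun F
  replace hH (H : Submodule F (Fin k → F)) (h : finrank F H + 1 = finrank F (Fin k → F)) :
      MVal M H = s := hH H (h.trans hdim)
  obtain ⟨t, ht⟩ : ∃ t, ∀ P, M P = t := by
    rcases isEmpty_or_nonempty (ℙ F (Fin k → F)) with _ | ⟨⟨P₀⟩⟩
    · exact ⟨0, isEmptyElim⟩
    · exact ⟨M P₀, fun P => eq_of_MVal_hyperplane_eq hH P P₀⟩
  refine ⟨t, ?_, ht, fun hk => ?_⟩
  · rw [← hn, MVal_eq_mul_of_forall_eq ht, finrank_top, hdim]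
  · have : Nonempty (Fin k) := ⟨⟨0, by omega⟩⟩
    obtain ⟨φ, hφ⟩ := exists_ne (0 : Dual F (Fin k → F))
    have hker := Dual.finrank_ker_add_one_of_ne_zero hφ
    rw [← hH _ hker, MVal_eq_mul_of_forall_eq ht,
      show finrank F (LinearMap.ker φ) = k - 1 by omega]

theorem stmt_1 {F : Type*} [Field F] [Fintype F] (q k n s : ℕ)
    (hq : Fintype.card F = q)
    (M : Projectivization F (Fin k → F) → ℕ)
    (hspan : IsSpanning M) (hn : MVal M ⊤ = n)
    (hH : ∀ H : Submodule F (Fin k → F), Module.finrank F H + 1 = k → MVal M H = s) :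
    ∃ t : ℕ, n = t * gaussNum q k ∧ (∀ P, M P = t) ∧
      (2 ≤ k → s = t * gaussNum q (k - 1)) :=
  stmt_1_general q k n s hq M hn hH
end

section
/- Let M be a spanning multiset of points in PG(k-1,q) of cardinality n, let 1 ≤ l ≤ k-2, and let K be an l-dimensional subspace. If every hyperplane containing K has multiplicity at least s, then M(K) ≥ s - (n-s)/(q-1) + (n-s)/(q^{k-l-1}(q-1)). -/
/-! Double count the incidences between the points of `M` and the `[k-l]_q` hyperplanes through
`K`: a point of `K` lies on all of them and any other point on `[k-l-1]_q`, so
`[k-l]_q s ≤ q^(k-l-1) M(K) + [k-l-1]_q n`, which rearranges to the bound. Hyperplanes are points of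
the dual projective space; those through `K` and a point `P` are the points of the annihilator of
`K ⊔ P`, which makes the counts instances of `|PG(d-1,q)| = [d]_q`. -/

open scoped Classical

open scoped LinearAlgebra.Projectivization
open Module Finset

lemma gaussNum_succ (q m : ℕ) : gaussNum q (m + 1) = gaussNum q m + q ^ m :=
  sum_range_succ _ _

section
variable {F V : Type*} [Field F] [AddCommGroup V] [Module F V]

namespace Projectivization

lemma submodule_le_iff_rep_mem (P : ℙ F V) (W : Submodule F V) :
    P.submodule ≤ W ↔ P.rep ∈ W := by
  rw [P.submodule_eq, Submodule.span_singleton_le_iff_mem]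

lemma range_map_subtype_s3 (W : Submodule F V) :
    Set.range (map W.subtype W.injective_subtype) = {P : ℙ F V | P.submodule ≤ W} := by
  ext P
  constructor
  · rintro ⟨Q, rfl⟩
    induction Q using Projectivization.ind with
    | h v hv => simp [map_mk, submodule_mk, Submodule.span_singleton_le_iff_mem]
  · intro hP
    have hmem : P.rep ∈ W := (submodule_le_iff_rep_mem P W).1 hP
    refine ⟨mk F ⟨P.rep, hmem⟩ (by simpa using P.rep_nonzero), ?_⟩
    simp [map_mk, P.mk_rep]

lemma card_setOf_submodule_le [Finite F] (W : Submodule F V) :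
    Nat.card {P : ℙ F V | P.submodule ≤ W} = gaussNum (Nat.card F) (finrank F W) := by
  rw [← range_map_subtype_s3, Nat.card_range_of_injective (map_injective _ _),
    card_of_finrank F W rfl, gaussNum]

lemma submodule_le_ker_rep_iff (P : ℙ F V) (ξ : ℙ F (Dual F V)) :
    P.submodule ≤ LinearMap.ker ξ.rep ↔ ξ.submodule ≤ P.submodule.dualAnnihilator := by
  rw [submodule_le_iff_rep_mem ξ, Submodule.mem_dualAnnihilator]
  exact Iff.rfl

lemma finrank_sup_submodule [FiniteDimensional F V] (K : Submodule F V) (P : ℙ F V) :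
    finrank F ↥(K ⊔ P.submodule) = finrank F K + if P.submodule ≤ K then 0 else 1 := by
  split_ifs with hPK
  · rw [sup_eq_left.2 hPK, add_zero]
  · rw [submodule_le_iff_rep_mem] at hPK
    rw [P.submodule_eq, Submodule.finrank_sup_span_singleton hPK]

end Projectivization

lemma MVal_eq_sum [Fintype (ℙ F V)] (M : ℙ F V → ℕ) (W : Submodule F V) :
    MVal M W = ∑ P, if P.submodule ≤ W then M P else 0 := by
  rw [MVal, finsum_mem_def, finsum_eq_sum_of_fintype]
  exact sum_congr rfl fun P _ => by simp [Set.indicator_apply]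

lemma sum_MVal_eq_sum_card_mul [Fintype (ℙ F V)] {ι : Type*} (S : Finset ι)
    (H : ι → Submodule F V) (M : ℙ F V → ℕ) :
    ∑ i ∈ S, MVal M (H i) = ∑ P, #{i ∈ S | P.submodule ≤ H i} * M P := by
  simp_rw [MVal_eq_sum]
  rw [sum_comm]
  exact sum_congr rfl fun P _ => by rw [← sum_filter, sum_const, smul_eq_mul]

/-- The hyperplanes through `K`, each encoded as the point `ξ` of the dual projective space with
kernel `ker ξ.rep`. -/
noncomputable def hyperplanesThrough [Fintype (ℙ F (Dual F V))] (K : Submodule F V) :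
    Finset (ℙ F (Dual F V)) :=
  {ξ | ξ.submodule ≤ K.dualAnnihilator}

lemma finrank_ker_rep_add_one [FiniteDimensional F V] (ξ : ℙ F (Dual F V)) :
    finrank F (LinearMap.ker ξ.rep) + 1 = finrank F V :=
  Dual.finrank_ker_add_one_of_ne_zero ξ.rep_nonzero

variable [Fintype (ℙ F (Dual F V))] {K : Submodule F V}

lemma le_ker_rep_of_mem_hyperplanesThrough {ξ : ℙ F (Dual F V)}
    (hξ : ξ ∈ hyperplanesThrough K) : K ≤ LinearMap.ker ξ.rep := by
  rw [hyperplanesThrough, mem_filter, Projectivization.submodule_le_iff_rep_mem] at hξ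
  exact fun v hv => (Submodule.mem_dualAnnihilator _).1 hξ.2 v hv

variable [Finite F] [FiniteDimensional F V]

lemma card_filter_submodule_le_of_dualAnnihilator (W : Submodule F V) :
    #{ξ : ℙ F (Dual F V) | ξ.submodule ≤ W.dualAnnihilator}
      = gaussNum (Nat.card F) (finrank F V - finrank F W) := by
  rw [← Fintype.card_subtype, ← Nat.card_eq_fintype_card]
  refine (Projectivization.card_setOf_submodule_le W.dualAnnihilator).trans ?_
  have := Subspace.finrank_add_finrank_dualAnnihilator_eq W
  congr 1
  omega

lemma card_hyperplanesThrough {m : ℕ} (hm : finrank F K + m + 1 = finrank F V) :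
    #(hyperplanesThrough K) = gaussNum (Nat.card F) (m + 1) := by
  rw [hyperplanesThrough, card_filter_submodule_le_of_dualAnnihilator]
  congr 1
  omega

lemma card_hyperplanesThrough_containing (P : ℙ F V) :
    #{ξ ∈ hyperplanesThrough K | P.submodule ≤ LinearMap.ker ξ.rep}
      = gaussNum (Nat.card F) (finrank F V - finrank F ↥(K ⊔ P.submodule)) := by
  rw [hyperplanesThrough, filter_filter, ← card_filter_submodule_le_of_dualAnnihilator,
    Submodule.dualAnnihilator_sup_eq]
  simp only [Projectivization.submodule_le_ker_rep_iff, le_inf_iff]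

lemma sum_MVal_hyperplanesThrough [Fintype (ℙ F V)] (M : ℙ F V → ℕ) {m : ℕ}
    (hm : finrank F K + m + 1 = finrank F V) :
    ∑ ξ ∈ hyperplanesThrough K, MVal M (LinearMap.ker ξ.rep)
      = Nat.card F ^ m * MVal M K + gaussNum (Nat.card F) m * MVal M ⊤ := by
  rw [sum_MVal_eq_sum_card_mul, MVal_eq_sum, MVal_eq_sum, mul_sum, mul_sum, ← sum_add_distrib]
  refine sum_congr rfl fun P _ => ?_
  rw [card_hyperplanesThrough_containing, Projectivization.finrank_sup_submodule]
  simp only [le_top, if_true]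
  split_ifs with hPK
  · rw [show finrank F V - (finrank F K + 0) = m + 1 by omega, gaussNum_succ]
    ring
  · rw [show finrank F V - (finrank F K + 1) = m by omega]
    ring

end

lemma le_of_gaussNum_mul_le {q m a s n : ℕ} (hq : 2 ≤ q)
    (h : gaussNum q (m + 1) * s ≤ q ^ m * a + gaussNum q m * n) :
    (s : ℚ) - ((n : ℚ) - s) / ((q : ℚ) - 1) + ((n : ℚ) - s) / ((q : ℚ) ^ m * ((q : ℚ) - 1))
      ≤ a := by
  have hq1 : (1 : ℚ) < q := by exact_mod_cast hq
  have hqm : (0 : ℚ) < (q : ℚ) ^ m := by positivity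
  have hgeom : (gaussNum q m : ℚ) * ((q : ℚ) - 1) = (q : ℚ) ^ m - 1 := by
    push_cast [gaussNum]
    exact geom_sum_mul _ _
  have h' : ((gaussNum q m : ℚ) + (q : ℚ) ^ m) * s ≤ (q : ℚ) ^ m * a + gaussNum q m * n := by
    rw [gaussNum_succ] at h
    exact_mod_cast h
  have hlhs : (s : ℚ) - ((n : ℚ) - s) / ((q : ℚ) - 1) + ((n : ℚ) - s) / ((q : ℚ) ^ m * ((q : ℚ) - 1))
      = (((gaussNum q m : ℚ) + (q : ℚ) ^ m) * s - gaussNum q m * n) / (q : ℚ) ^ m := by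
    have : (q : ℚ) - 1 ≠ 0 := by linarith
    field_simp
    linear_combination ((n : ℚ) - s) * hgeom
  rw [hlhs, div_le_iff₀ hqm]
  linarith

theorem stmt_3_general {F : Type*} [Field F] [Fintype F] (q k l n s : ℕ)
    (hq : Fintype.card F = q)
    (M : Projectivization F (Fin k → F) → ℕ)
    (hn : MVal M ⊤ = n)
    (hl1 : 1 ≤ l) (hl2 : l ≤ k - 2)
    (K : Submodule F (Fin k → F)) (hK : Module.finrank F K = l)
    (hs : ∀ H : Submodule F (Fin k → F), Module.finrank F H + 1 = k → K ≤ H → s ≤ MVal M H) :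
    (s : ℚ) - ((n : ℚ) - s) / ((q : ℚ) - 1)
      + ((n : ℚ) - s) / ((q : ℚ) ^ (k - l - 1) * ((q : ℚ) - 1)) ≤ (MVal M K : ℚ) := by
  have hqF : Nat.card F = q := Nat.card_eq_fintype_card.trans hq
  have : Finite (Dual F (Fin k → F)) := Module.finite_of_finite F
  let := Fintype.ofFinite (ℙ F (Fin k → F))
  let := Fintype.ofFinite (ℙ F (Dual F (Fin k → F)))
  have hdim : finrank F K + (k - l - 1) + 1 = finrank F (Fin k → F) := by
    rw [hK, finrank_fin_fun]
    omega
  refine le_of_gaussNum_mul_le (hqF ▸ Finite.one_lt_card) ?_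
  calc gaussNum q (k - l - 1 + 1) * s = ∑ _ξ ∈ hyperplanesThrough K, s := by
        rw [sum_const, card_hyperplanesThrough hdim, hqF, smul_eq_mul]
    _ ≤ ∑ ξ ∈ hyperplanesThrough K, MVal M (LinearMap.ker ξ.rep) :=
        sum_le_sum fun ξ hξ => hs _ (by rw [finrank_ker_rep_add_one, finrank_fin_fun])
          (le_ker_rep_of_mem_hyperplanesThrough hξ)
    _ = q ^ (k - l - 1) * MVal M K + gaussNum q (k - l - 1) * n := by
        rw [sum_MVal_hyperplanesThrough M hdim, hqF, hn]

theorem stmt_3 {F : Type*} [Field F] [Fintype F] (q k l n s : ℕ)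
    (hq : Fintype.card F = q)
    (M : Projectivization F (Fin k → F) → ℕ)
    (hspan : IsSpanning M) (hn : MVal M ⊤ = n)
    (hl1 : 1 ≤ l) (hl2 : l ≤ k - 2)
    (K : Submodule F (Fin k → F)) (hK : Module.finrank F K = l)
    (hs : ∀ H : Submodule F (Fin k → F), Module.finrank F H + 1 = k → K ≤ H → s ≤ MVal M H) :
    (s : ℚ) - ((n : ℚ) - s) / ((q : ℚ) - 1)
      + ((n : ℚ) - s) / ((q : ℚ) ^ (k - l - 1) * ((q : ℚ) - 1)) ≤ (MVal M K : ℚ) :=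
  stmt_3_general q k l n s hq M hn hl1 hl2 K hK hs
end

section
/- Let M be a 2-divisible multiset of points in PG(v-1,2) of cardinality 6 with maximum point multiplicity 1 (i.e., M is a set of 6 points). Then either M is a projective base of size 6, or M = χ_{L_1} + χ_{L_2} for two disjoint lines L_1, L_2. -/
open scoped Classical

/-!
Over `𝔽₂` a point is a nonzero vector. Two-divisibility of the six points means that every
linear functional is nonzero on an even number of them, so the six vectors sum to `0`. If three
of them sum to `0` they are the three points of a line, and so are the other three. Otherwise no
nonempty proper subset sums to `0`: one or two distinct points never do, and a zero-sum set of
four or five points would leave a zero-sum complement of two or one. Hence any five of the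
points are linearly independent.
-/

open scoped LinearAlgebra.Projectivization

namespace ZModModule

variable {V : Type*} [AddCommGroup V] [Module (ZMod 2) V]

theorem linearIndependent_of_forall_sum_ne_zero {ι : Type*} {v : ι → V}
    (h : ∀ s : Finset ι, s.Nonempty → ∑ i ∈ s, v i ≠ 0) : LinearIndependent (ZMod 2) v := by
  rw [linearIndependent_iff']
  intro s g hg i hi
  by_contra hgi
  refine h (s.filter fun j => g j ≠ 0) ⟨i, Finset.mem_filter.mpr ⟨hi, hgi⟩⟩ ?_
  rw [Finset.sum_filter]
  refine (Finset.sum_congr rfl fun j _ => ?_).trans hg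
  by_cases hj : g j = 0
  · simp [hj]
  · rw [if_pos hj, (by decide : ∀ a : ZMod 2, a ≠ 0 → a = 1) _ hj, one_smul]

theorem mem_span_pair_iff_of_ne_zero {x y z : V} (hz : z ≠ 0) :
    z ∈ Submodule.span (ZMod 2) {x, y} ↔ z = x ∨ z = y ∨ z = x + y := by
  rw [Submodule.mem_span_pair]
  constructor
  · rintro ⟨s, t, rfl⟩
    have hbit : ∀ a : ZMod 2, a = 0 ∨ a = 1 := by decide
    rcases hbit s with rfl | rfl <;> rcases hbit t with rfl | rfl <;> simp_all
  · rintro (rfl | rfl | rfl)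
    exacts [⟨1, 0, by simp⟩, ⟨0, 1, by simp⟩, ⟨1, 1, by simp⟩]

end ZModModule

namespace Projectivization

section Field

variable {F V : Type*} [Field F] [AddCommGroup V] [Module F V]

theorem rep_injective : Function.Injective (Projectivization.rep : ℙ F V → V) := fun P Q h => by
  rw [← P.mk_rep, ← Q.mk_rep, mk_eq_mk_iff']
  exact ⟨1, by rw [one_smul, h]⟩

theorem submodule_le_ker_iff {W : Type*} [AddCommGroup W] [Module F W] (P : ℙ F V)
    (f : V →ₗ[F] W) : P.submodule ≤ LinearMap.ker f ↔ f P.rep = 0 := by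
  rw [submodule_eq, Submodule.span_singleton_le_iff_mem, LinearMap.mem_ker]

theorem iSup_submodule_eq_span_range (T : Finset (ℙ F V)) :
    ⨆ P ∈ T, P.submodule = Submodule.span F (Set.range fun P : T => P.1.rep) := by
  rw [Submodule.span_range_eq_iSup, iSup_subtype]
  simp only [submodule_eq]

theorem inf_eq_bot_of_forall_submodule_le {L₁ L₂ : Submodule F V}
    (h : ∀ Q : ℙ F V, Q.submodule ≤ L₁ → Q.submodule ≤ L₂ → False) : L₁ ⊓ L₂ = ⊥ := by
  refine (Submodule.eq_bot_iff _).mpr fun x hx => ?_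
  by_contra hx0
  rw [Submodule.mem_inf, ← Submodule.span_singleton_le_iff_mem,
    ← Submodule.span_singleton_le_iff_mem, ← submodule_mk x hx0] at hx
  exact h _ hx.1 hx.2

theorem sum_rep_ne_zero_of_card_le_two {u : Finset (ℙ F V)} (hu : u.Nonempty)
    (hu2 : u.card ≤ 2) : ∑ P ∈ u, P.rep ≠ 0 := by
  obtain h1 | h2 : u.card = 1 ∨ u.card = 2 := by have := hu.card_pos; omega
  · obtain ⟨a, rfl⟩ := Finset.card_eq_one.mp h1
    simpa using a.rep_nonzero
  · obtain ⟨a, b, hab, rfl⟩ := Finset.card_eq_two.mp h2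
    rw [Finset.sum_pair hab]
    intro h
    rw [add_eq_zero_iff_eq_neg] at h
    refine hab ?_
    rw [← a.mk_rep, ← b.mk_rep, mk_eq_mk_iff']
    exact ⟨-1, by rw [h, neg_one_smul]⟩

theorem eq_empty_or_eq_of_sum_rep_eq_zero {S u : Finset (ℙ F V)} (hS : S.card = 6)
    (hS0 : ∑ P ∈ S, P.rep = 0) (h3 : ∀ t ⊆ S, t.card = 3 → ∑ P ∈ t, P.rep ≠ 0) (huS : u ⊆ S)
    (hu0 : ∑ P ∈ u, P.rep = 0) : u = ∅ ∨ u = S := by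
  by_contra! h
  have hw0 : ∑ P ∈ S \ u, P.rep = 0 := by
    rwa [← Finset.sum_sdiff huS, hu0, add_zero] at hS0
  have hcard : (S \ u).card + u.card = 6 := by rw [Finset.card_sdiff_add_card_eq_card huS, hS]
  have hw : (S \ u).Nonempty := Finset.sdiff_nonempty.mpr fun hSu => h.2 (huS.antisymm hSu)
  have hu3 : u.card ≠ 3 := fun h' => h3 u huS h' hu0
  by_cases hsmall : u.card ≤ 2
  · exact sum_rep_ne_zero_of_card_le_two h.1 hsmall hu0
  · exact sum_rep_ne_zero_of_card_le_two hw (by omega) hw0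

end Field

section ZModTwo

variable {V : Type*} [AddCommGroup V] [Module (ZMod 2) V]

theorem finrank_iSup_submodule_eq_card {T : Finset (ℙ (ZMod 2) V)}
    (hT : ∀ u ⊆ T, u.Nonempty → ∑ P ∈ u, P.rep ≠ 0) :
    Module.finrank (ZMod 2) (⨆ P ∈ T, P.submodule : Submodule (ZMod 2) V) = T.card := by
  have hli : LinearIndependent (ZMod 2) fun P : T => P.1.rep := by
    refine ZModModule.linearIndependent_of_forall_sum_ne_zero fun s hs h0 => ?_
    refine hT (s.map (Function.Embedding.subtype _)) (fun P hP => ?_) hs.map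
      (by rwa [Finset.sum_map])
    obtain ⟨Q, -, rfl⟩ := Finset.mem_map.mp hP
    exact Q.2
  rw [iSup_submodule_eq_span_range, finrank_span_eq_card hli, Fintype.card_coe]

theorem exists_line_of_card_eq_three {u : Finset (ℙ (ZMod 2) V)} (hu : u.card = 3)
    (hu0 : ∑ P ∈ u, P.rep = 0) :
    ∃ L : Submodule (ZMod 2) V, Module.finrank (ZMod 2) L = 2 ∧
      ∀ Q : ℙ (ZMod 2) V, Q.submodule ≤ L ↔ Q ∈ u := by
  obtain ⟨a, b, c, hab, hac, hbc, rfl⟩ := Finset.card_eq_three.mp hu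
  have hc : c.rep = a.rep + b.rep := by
    rw [Finset.sum_insert (by simp [hab, hac]), Finset.sum_pair hbc, ← add_assoc] at hu0
    rw [eq_neg_of_add_eq_zero_right hu0, ZModModule.neg_eq_self]
  refine ⟨⨆ P ∈ ({a, b} : Finset _), P.submodule, ?_, fun Q => ?_⟩
  · rw [finrank_iSup_submodule_eq_card, Finset.card_pair hab]
    exact fun w hw hne => sum_rep_ne_zero_of_card_le_two hne
      ((Finset.card_le_card hw).trans (Finset.card_pair hab).le)
  · simp only [Finset.iSup_insert, Finset.iSup_singleton, submodule_eq]
    rw [← Submodule.span_insert, Submodule.span_singleton_le_iff_mem,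
      ZModModule.mem_span_pair_iff_of_ne_zero Q.rep_nonzero, ← hc, rep_injective.eq_iff,
      rep_injective.eq_iff, rep_injective.eq_iff]
    simp

end ZModTwo

end Projectivization

open Projectivization

theorem MVal_ite_mem {F V : Type*} [Field F] [AddCommGroup V] [Module F V]
    (S : Finset (ℙ F V)) (K : Submodule F V) :
    MVal (fun P => if P ∈ S then 1 else 0) K = (S.filter fun P => P.submodule ≤ K).card := by
  rw [MVal, finsum_mem_eq_sum_of_inter_support_eq _ (t := S.filter fun P => P.submodule ≤ K)]
  · rw [Finset.card_eq_sum_ones]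
    exact Finset.sum_congr rfl fun P hP => if_pos (Finset.mem_filter.mp hP).1
  · ext P
    by_cases hP : P ∈ S <;> simp [hP]

section ZModTwo

variable {V : Type*} [AddCommGroup V] [Module (ZMod 2) V]

theorem sum_rep_eq_zero_of_isDivisible [FiniteDimensional (ZMod 2) V]
    {S : Finset (ℙ (ZMod 2) V)} (hS : IsDivisible 2 fun P => if P ∈ S then 1 else 0) :
    ∑ P ∈ S, P.rep = 0 := by
  refine (Module.forall_dual_apply_eq_zero_iff (ZMod 2) _).mp fun f => ?_
  by_cases hf : f = 0
  · simp [hf]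
  have hker : Module.finrank (ZMod 2) (LinearMap.ker f) + 1 = Module.finrank (ZMod 2) V := by
    have := f.finrank_range_add_finrank_ker
    rw [LinearMap.range_eq_top.mpr (LinearMap.surjective_of_ne_zero hf), finrank_top,
      Module.finrank_self] at this
    omega
  have hmod := hS (LinearMap.ker f) hker
  simp only [MVal_ite_mem, submodule_le_ker_iff, le_top, Finset.filter_true] at hmod
  have hsplit := Finset.card_filter_add_card_filter_not (s := S) fun P => f P.rep = 0
  have heven : (S.filter fun P => ¬ f P.rep = 0).card % 2 = 0 := by
    unfold Nat.ModEq at hmod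
    omega
  have hbit : ∀ a : ZMod 2, a = if ¬ a = 0 then 1 else 0 := by decide
  rw [map_sum, Finset.sum_congr rfl fun P _ => hbit (f P.rep), ← Finset.natCast_card_filter,
    ZMod.natCast_eq_zero_iff_even, Nat.even_iff]
  exact heven

theorem isProjBase_six_of_sum_rep_eq_zero {S : Finset (ℙ (ZMod 2) V)} (hS : S.card = 6)
    (hS0 : ∑ P ∈ S, P.rep = 0) (h3 : ∀ u ⊆ S, u.card = 3 → ∑ P ∈ u, P.rep ≠ 0) :
    IsProjBase 6 S := by
  refine ⟨hS, fun T hTS hT => ?_⟩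
  rw [finrank_iSup_submodule_eq_card, hT]
  intro u huT hu hu0
  rcases eq_empty_or_eq_of_sum_rep_eq_zero hS hS0 h3 (huT.trans hTS) hu0 with rfl | rfl
  · exact Finset.not_nonempty_empty hu
  · have := Finset.card_le_card huT
    omega

end ZModTwo

theorem stmt_6 (v : ℕ) (M : Projectivization (ZMod 2) (Fin v → ZMod 2) → ℕ)
    (hdiv : IsDivisible 2 M) (hcard : MVal M ⊤ = 6) (hγ : ∀ P, M P ≤ 1) :
    (∃ B : Finset (Projectivization (ZMod 2) (Fin v → ZMod 2)), IsProjBase 6 B ∧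
      ∀ Q, M Q = if Q ∈ B then 1 else 0) ∨
    (∃ L₁ L₂ : Submodule (ZMod 2) (Fin v → ZMod 2),
      Module.finrank (ZMod 2) L₁ = 2 ∧ Module.finrank (ZMod 2) L₂ = 2 ∧ L₁ ⊓ L₂ = ⊥ ∧
      ∀ Q, M Q = (if Q.submodule ≤ L₁ then 1 else 0) + (if Q.submodule ≤ L₂ then 1 else 0)) := by
  obtain ⟨S, rfl⟩ : ∃ S : Finset _, M = fun P => if P ∈ S then 1 else 0 :=
    ⟨(Set.toFinite (Function.support M)).toFinset, funext fun P => by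
      rcases Nat.le_one_iff_eq_zero_or_eq_one.mp (hγ P) with hP | hP <;> simp [hP]⟩
  have hS : S.card = 6 := by simpa [MVal_ite_mem] using hcard
  have hS0 := sum_rep_eq_zero_of_isDivisible hdiv
  by_cases h3 : ∃ u ⊆ S, u.card = 3 ∧ ∑ P ∈ u, P.rep = 0
  · obtain ⟨u, huS, hu3, hu0⟩ := h3
    have hw3 : (S \ u).card = 3 := by rw [Finset.card_sdiff_of_subset huS]; omega
    have hw0 : ∑ P ∈ S \ u, P.rep = 0 := by rwa [← Finset.sum_sdiff huS, hu0, add_zero] at hS0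
    obtain ⟨L₁, hL₁, hQ₁⟩ := exists_line_of_card_eq_three hu3 hu0
    obtain ⟨L₂, hL₂, hQ₂⟩ := exists_line_of_card_eq_three hw3 hw0
    refine Or.inr ⟨L₁, L₂, hL₁, hL₂, inf_eq_bot_of_forall_submodule_le
      fun Q h₁ h₂ => (Finset.mem_sdiff.mp ((hQ₂ Q).mp h₂)).2 ((hQ₁ Q).mp h₁), fun Q => ?_⟩
    have := @huS Q
    simp only [hQ₁, hQ₂, Finset.mem_sdiff]
    split_ifs <;> tauto
  · push Not at h3
    exact Or.inl ⟨S, isProjBase_six_of_sum_rep_eq_zero hS hS0 h3, fun Q => rfl⟩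
end

section
/- Let M be a 4-divisible multiset of points in PG(v-1,2) of cardinality 12 with maximum point multiplicity at most 3. Then every point has even multiplicity, i.e., (1/2)·M is a 2-divisible multiset of cardinality 6. -/
/-!
Over `𝔽₂` the points of `PG(v-1,2)` are the nonzero vectors and the hyperplanes are the kernels
of the nonzero functionals `u`, so 4-divisibility says that every weight
`w(u) = ∑_{u x = 1} m x` is divisible by 4: the columns of a doubly-even code of length 12.
Write `m = 2·[m ≥ 2] + [m odd]` and let `S` be the set of points of odd multiplicity.
As `w(u) + w(u') - w(u + u')` is twice the weight of `m` on `{u = 1} ∩ {u' = 1}`, reducing mod 2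
shows that `S ∩ {u = 1}` meets every `{u' = 1}` evenly, so it sums to zero, and so does its
complement in `S`. A zero-sum set of nonzero vectors never has one or two elements; separating two
points of `S` by a functional then gives `|S| ≥ 8` as soon as `S ≠ ∅`. For `|S| = 8` the two points
of multiplicity `≥ 2` would also sum to zero. For `|S| = 10` and `|S| = 12` the weights on `S`
are confined to few values, which contradicts their first resp. second moment, computed from the
fact that prescribing the values of `u` on one resp. two distinct nonzero vectors cuts out
`1/2` resp. `1/4` of the dual space.
-/

open scoped Classical

open Finset

theorem AddMonoidHom.card_mul_card_fiber_of_surjective {G H : Type*} [AddGroup G] [Fintype G]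
    [AddGroup H] [Fintype H] [DecidableEq H] (f : G →+ H) (hf : Function.Surjective f) (y : H) :
    Fintype.card H * #{g | f g = y} = Fintype.card G := by
  have hfib := card_eq_sum_card_fiberwise (s := (univ : Finset G)) (t := univ) (f := f)
    fun _ _ => mem_univ _
  rw [card_univ] at hfib
  rw [hfib, sum_congr rfl fun z _ => AddMonoidHom.card_fiber_eq_of_mem_range f (hf z) (hf y),
    sum_const, card_univ, smul_eq_mul]

section FiniteField

variable {F V : Type*} [Field F] [AddCommGroup V] [Module F V]

theorem exists_dual_apply_eq_of_linearIndependent {k : ℕ} {x : Fin k → V}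
    (hx : LinearIndependent F x) (c : Fin k → F) : ∃ u : Module.Dual F V, ∀ i, u (x i) = c i := by
  obtain ⟨u, hu⟩ := LinearMap.dualMap_surjective_of_injective hx.fintypeLinearCombination_injective
    (Fintype.linearCombination F c)
  refine ⟨u, fun i => ?_⟩
  simpa [Fintype.linearCombination_apply_single] using LinearMap.congr_fun hu (Pi.single i 1)

variable [Fintype F] [DecidableEq F] [Fintype (Module.Dual F V)]

theorem card_pow_mul_card_dual_apply_eq {k : ℕ} {x : Fin k → V} (hx : LinearIndependent F x)
    (c : Fin k → F) :
    Fintype.card F ^ k * #{u : Module.Dual F V | ∀ i, u (x i) = c i} =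
      Fintype.card (Module.Dual F V) := by
  let ev : Module.Dual F V →+ (Fin k → F) :=
    (LinearMap.pi fun i => Module.Dual.eval F V (x i)).toAddMonoidHom
  have hev : Function.Surjective ev := fun c => by
    obtain ⟨u, hu⟩ := exists_dual_apply_eq_of_linearIndependent hx c
    exact ⟨u, funext hu⟩
  have hcard : Fintype.card (Fin k → F) = Fintype.card F ^ k := by simp
  rw [← hcard, ← ev.card_mul_card_fiber_of_surjective hev c]
  simp [ev, funext_iff]

end FiniteField

theorem ZMod.eq_zero_or_eq_one (a : ZMod 2) : a = 0 ∨ a = 1 := by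
  decide +revert

section ZModTwo

variable {V : Type*} [AddCommGroup V] [Module (ZMod 2) V]

theorem linearIndependent_pair_of_ne {x y : V} (hx : x ≠ 0) (hy : y ≠ 0) (hxy : x ≠ y) :
    LinearIndependent (ZMod 2) ![x, y] := by
  refine LinearIndependent.pair_iff.2 fun s t hst => ?_
  rcases s.eq_zero_or_eq_one with rfl | rfl <;> rcases t.eq_zero_or_eq_one with rfl | rfl <;>
    simp_all [add_eq_zero_iff_eq_neg, ZModModule.neg_eq_self]

theorem sum_eq_zero_of_forall_even_card_filter {T : Finset V}
    (h : ∀ u : Module.Dual (ZMod 2) V, Even #{x ∈ T | u x = 1}) : ∑ x ∈ T, x = 0 := by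
  refine (Module.forall_dual_apply_eq_zero_iff (ZMod 2) _).1 fun u => ?_
  have hbool : ∀ x ∈ T, u x = if u x = 1 then 1 else 0 := fun x _ => by
    generalize u x = a
    decide +revert
  rw [map_sum, sum_congr rfl hbool, sum_boole, ZMod.natCast_eq_zero_iff_even]
  exact h u

theorem card_eq_zero_or_three_le_of_sum_eq_zero {T : Finset V} (h0 : (0 : V) ∉ T)
    (hT : ∑ x ∈ T, x = 0) : #T = 0 ∨ 3 ≤ #T := by
  by_contra! h
  obtain h1 | h2 : #T = 1 ∨ #T = 2 := by omega
  · obtain ⟨a, rfl⟩ := card_eq_one.1 h1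
    simp_all
  · obtain ⟨a, b, hab, rfl⟩ := card_eq_two.1 h2
    rw [sum_pair hab, add_eq_zero_iff_eq_neg, ZModModule.neg_eq_self] at hT
    exact hab hT

variable [Fintype (Module.Dual (ZMod 2) V)]

theorem two_mul_card_dual_apply_eq_one {x : V} (hx : x ≠ 0) :
    2 * #{u : Module.Dual (ZMod 2) V | u x = 1} = Fintype.card (Module.Dual (ZMod 2) V) := by
  simpa using card_pow_mul_card_dual_apply_eq (linearIndependent_unique_iff.2 hx :
    LinearIndependent (ZMod 2) ![x]) ![1]

theorem four_mul_card_dual_apply_eq_one_and {x y : V} (hx : x ≠ 0) (hy : y ≠ 0) :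
    4 * #{u : Module.Dual (ZMod 2) V | u x = 1 ∧ u y = 1} =
      Fintype.card (Module.Dual (ZMod 2) V) +
        if x = y then Fintype.card (Module.Dual (ZMod 2) V) else 0 := by
  by_cases hxy : x = y
  · subst hxy
    simp only [and_self, if_true]
    have := two_mul_card_dual_apply_eq_one hx
    omega
  · simpa [Fin.forall_fin_two, hxy] using
      card_pow_mul_card_dual_apply_eq (linearIndependent_pair_of_ne hx hy hxy) ![1, 1]

end ZModTwo

theorem sum_eq_two_mul_card_add_card {α : Type*} {m : α → ℕ} (hm3 : ∀ x, m x ≤ 3)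
    (s : Finset α) : ∑ x ∈ s, m x = 2 * #{x ∈ s | 2 ≤ m x} + #{x ∈ s | m x % 2 = 1} := by
  rw [card_eq_sum_ones, card_eq_sum_ones, sum_filter, sum_filter, mul_sum, ← sum_add_distrib]
  refine sum_congr rfl fun x _ => ?_
  have := hm3 x
  split_ifs <;> omega

section Parts

variable {V : Type*} [Fintype V]

def oddPart (m : V → ℕ) : Finset V := {x | m x % 2 = 1}

def heavyPart (m : V → ℕ) : Finset V := {x | 2 ≤ m x}

variable {m : V → ℕ}

theorem two_mul_card_heavyPart_add_card_oddPart (hm3 : ∀ x, m x ≤ 3) :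
    2 * #(heavyPart m) + #(oddPart m) = ∑ x, m x :=
  (sum_eq_two_mul_card_add_card hm3 univ).symm

theorem ne_zero_of_mem_oddPart [Zero V] (h0 : m 0 = 0) {x : V} (hx : x ∈ oddPart m) : x ≠ 0 := by
  rintro rfl
  simp [oddPart, h0] at hx

theorem ne_zero_of_mem_heavyPart [Zero V] (h0 : m 0 = 0) {x : V} (hx : x ∈ heavyPart m) :
    x ≠ 0 := by
  rintro rfl
  simp [heavyPart, h0] at hx

end Parts

section Weight

variable {V : Type*} [AddCommGroup V] [Module (ZMod 2) V]

def weightOn (T : Finset V) (u : Module.Dual (ZMod 2) V) : ℕ := #{x ∈ T | u x = 1}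

theorem sum_weightOn_mul_eq (U : Finset (Module.Dual (ZMod 2) V)) (T : Finset V)
    (g : Module.Dual (ZMod 2) V → ℕ) :
    ∑ u ∈ U, weightOn T u * g u = ∑ x ∈ T, ∑ u ∈ U with u x = 1, g u := by
  simp_rw [weightOn, card_eq_sum_ones, sum_mul, one_mul, sum_filter]
  exact sum_comm

theorem sum_weightOn_eq (U : Finset (Module.Dual (ZMod 2) V)) (T : Finset V) :
    ∑ u ∈ U, weightOn T u = ∑ x ∈ T, #{u ∈ U | u x = 1} := by
  simpa using sum_weightOn_mul_eq U T 1

variable [Fintype V]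

def weight (m : V → ℕ) (u : Module.Dual (ZMod 2) V) : ℕ := ∑ x with u x = 1, m x

variable {m : V → ℕ}

theorem weight_add_weight (u u' : Module.Dual (ZMod 2) V) :
    weight m u + weight m u' = weight m (u + u') + 2 * ∑ x with u x = 1 ∧ u' x = 1, m x := by
  simp only [weight, sum_filter, mul_sum, ← sum_add_distrib, LinearMap.add_apply]
  refine sum_congr rfl fun x _ => ?_
  rcases (u x).eq_zero_or_eq_one with h | h <;> rcases (u' x).eq_zero_or_eq_one with h' | h' <;>
    simp [h, h', two_mul]

theorem weight_eq_two_mul_add (hm3 : ∀ x, m x ≤ 3) (u : Module.Dual (ZMod 2) V) :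
    weight m u = 2 * weightOn (heavyPart m) u + weightOn (oddPart m) u := by
  simp only [weight, weightOn, heavyPart, oddPart, filter_filter, sum_eq_two_mul_card_add_card hm3]
  simp only [and_comm]

end Weight

section OddPart

variable {V : Type*} [AddCommGroup V] [Module (ZMod 2) V] [Fintype V]
  {m : V → ℕ}

theorem two_dvd_weightOn_oddPart (hm3 : ∀ x, m x ≤ 3)
    (hw : ∀ u, 4 ∣ weight m u) (u : Module.Dual (ZMod 2) V) : 2 ∣ weightOn (oddPart m) u := by
  have := weight_eq_two_mul_add hm3 u
  have := hw u
  omega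

theorem two_dvd_card_oddPart_filter_and (hm3 : ∀ x, m x ≤ 3) (hw : ∀ u, 4 ∣ weight m u)
    (u u' : Module.Dual (ZMod 2) V) : 2 ∣ #{x ∈ oddPart m | u x = 1 ∧ u' x = 1} := by
  have hsplit := sum_eq_two_mul_card_add_card hm3 {x | u x = 1 ∧ u' x = 1}
  have hodd : #{x ∈ oddPart m | u x = 1 ∧ u' x = 1} =
      #{x ∈ {x | u x = 1 ∧ u' x = 1} | m x % 2 = 1} := by
    simp only [oddPart, filter_filter, and_comm]
  have := weight_add_weight (m := m) u u'
  have := hw u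
  have := hw u'
  have := hw (u + u')
  omega

theorem sum_oddPart_eq_zero (hm3 : ∀ x, m x ≤ 3) (hw : ∀ u, 4 ∣ weight m u) :
    ∑ x ∈ oddPart m, x = 0 :=
  sum_eq_zero_of_forall_even_card_filter fun u =>
    even_iff_two_dvd.2 (two_dvd_weightOn_oddPart hm3 hw u)

theorem sum_oddPart_filter_eq_zero (hm3 : ∀ x, m x ≤ 3) (hw : ∀ u, 4 ∣ weight m u)
    (u : Module.Dual (ZMod 2) V) : ∑ x ∈ oddPart m with u x = 1, x = 0 :=
  sum_eq_zero_of_forall_even_card_filter fun u' => by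
    rw [filter_filter]
    exact even_iff_two_dvd.2 (two_dvd_card_oddPart_filter_and hm3 hw u u')

theorem weightOn_oddPart_cases (h0 : m 0 = 0) (hm3 : ∀ x, m x ≤ 3) (hw : ∀ u, 4 ∣ weight m u)
    (u : Module.Dual (ZMod 2) V) :
    (weightOn (oddPart m) u = 0 ∨ 3 ≤ weightOn (oddPart m) u) ∧
      (weightOn (oddPart m) u = #(oddPart m) ∨ weightOn (oddPart m) u + 3 ≤ #(oddPart m)) := by
  have h0S : (0 : V) ∉ oddPart m := by simp [oddPart, h0]
  have hin := sum_oddPart_filter_eq_zero hm3 hw u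
  have hout : ∑ x ∈ oddPart m with ¬ u x = 1, x = 0 := by
    have hsplit := sum_filter_add_sum_filter_not (oddPart m) (fun x => u x = 1) fun x => x
    rwa [hin, zero_add, sum_oddPart_eq_zero hm3 hw] at hsplit
  have hcard := card_filter_add_card_filter_not (s := oddPart m) (fun x => u x = 1)
  have := card_eq_zero_or_three_le_of_sum_eq_zero (fun h => h0S (mem_filter.1 h).1) hin
  have := card_eq_zero_or_three_le_of_sum_eq_zero (fun h => h0S (mem_filter.1 h).1) hout
  unfold weightOn
  omega

theorem eight_le_card_oddPart (h0 : m 0 = 0) (hm3 : ∀ x, m x ≤ 3) (hw : ∀ u, 4 ∣ weight m u)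
    (heven : 2 ∣ #(oddPart m)) (hS : (oddPart m).Nonempty) : 8 ≤ #(oddPart m) := by
  obtain ⟨x₀, hx₀, x₁, hx₁, hne⟩ :=
    (one_lt_card (s := oddPart m)).1 (by have := hS.card_pos; omega)
  obtain ⟨u, hu⟩ := exists_dual_apply_eq_of_linearIndependent (linearIndependent_pair_of_ne
    (ne_zero_of_mem_oddPart h0 hx₀) (ne_zero_of_mem_oddPart h0 hx₁) hne) ![1, 0]
  have hu₀ : u x₀ = 1 := hu 0
  have hu₁ : u x₁ = 0 := hu 1
  have hpos : 0 < weightOn (oddPart m) u := card_pos.2 ⟨x₀, mem_filter.2 ⟨hx₀, hu₀⟩⟩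
  have hlt : weightOn (oddPart m) u < #(oddPart m) :=
    card_lt_card (filter_ssubset.2 ⟨x₁, hx₁, by simp [hu₁]⟩)
  have := weightOn_oddPart_cases h0 hm3 hw u
  have := two_dvd_weightOn_oddPart hm3 hw u
  omega

theorem card_oddPart_ne_eight (h0 : m 0 = 0) (hm3 : ∀ x, m x ≤ 3) (hw : ∀ u, 4 ∣ weight m u)
    (hsum : ∑ x, m x = 12) : #(oddPart m) ≠ 8 := by
  intro h8
  have hcard := two_mul_card_heavyPart_add_card_oddPart hm3
  have heven : ∀ u : Module.Dual (ZMod 2) V, Even #{x ∈ heavyPart m | u x = 1} := fun u => by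
    have := weightOn_oddPart_cases h0 hm3 hw u
    have := two_dvd_weightOn_oddPart hm3 hw u
    have := weight_eq_two_mul_add hm3 u
    have := hw u
    rw [even_iff_two_dvd]
    unfold weightOn at *
    omega
  have := card_eq_zero_or_three_le_of_sum_eq_zero (fun h => ne_zero_of_mem_heavyPart h0 h rfl)
    (sum_eq_zero_of_forall_even_card_filter heven)
  omega

end OddPart

section Cases

variable {V : Type*} [AddCommGroup V] [Module (ZMod 2) V] [Fintype V]
  [Fintype (Module.Dual (ZMod 2) V)] {m : V → ℕ}

theorem card_oddPart_ne_ten (h0 : m 0 = 0) (hm3 : ∀ x, m x ≤ 3) (hw : ∀ u, 4 ∣ weight m u)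
    (hsum : ∑ x, m x = 12) : #(oddPart m) ≠ 10 := by
  intro h10
  have hcard := two_mul_card_heavyPart_add_card_oddPart hm3
  obtain ⟨z, hz⟩ := card_eq_one.1 (show #(heavyPart m) = 1 by omega)
  have hz0 : z ≠ 0 := ne_zero_of_mem_heavyPart h0 (hz ▸ mem_singleton_self z)
  set D := Fintype.card (Module.Dual (ZMod 2) V)
  -- For `u z = 1`, `4 ∣ 2 + weightOn S u` forces `weightOn S u ≥ 6`, but its mean over these `u`
  -- is at most `11/2`.
  set U := ({u | u z = 1} : Finset (Module.Dual (ZMod 2) V))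
  have hlow : ∀ u ∈ U, 6 ≤ weightOn (oddPart m) u := fun u hu => by
    have hH : weightOn (heavyPart m) u = 1 := by
      simp [weightOn, hz, filter_singleton, (mem_filter.1 hu).2]
    have := weightOn_oddPart_cases h0 hm3 hw u
    have := two_dvd_weightOn_oddPart hm3 hw u
    have := weight_eq_two_mul_add hm3 u
    have := hw u
    omega
  have hcount : ∑ u ∈ U, weightOn (oddPart m) u =
      ∑ x ∈ oddPart m, #{u : Module.Dual (ZMod 2) V | u z = 1 ∧ u x = 1} := by
    rw [sum_weightOn_eq]
    simp only [U, filter_filter]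
  have hup : 4 * ∑ u ∈ U, weightOn (oddPart m) u ≤ 11 * D :=
    calc 4 * ∑ u ∈ U, weightOn (oddPart m) u
        = ∑ x ∈ oddPart m, 4 * #{u : Module.Dual (ZMod 2) V | u z = 1 ∧ u x = 1} := by
          rw [hcount, mul_sum]
      _ = ∑ x ∈ oddPart m, (D + if z = x then D else 0) :=
          sum_congr rfl fun x hx =>
            four_mul_card_dual_apply_eq_one_and hz0 (ne_zero_of_mem_oddPart h0 hx)
      _ ≤ 11 * D := by
          rw [sum_add_distrib, sum_const, h10, sum_ite_eq]
          split_ifs <;> simp <;> omega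
  have hsum_le := card_nsmul_le_sum U (fun u => weightOn (oddPart m) u) 6 hlow
  have hU : 2 * #U = D := two_mul_card_dual_apply_eq_one hz0
  have : 0 < D := Fintype.card_pos
  rw [smul_eq_mul] at hsum_le
  omega

theorem twelve_mul_le_mul_self_add_of_four_dvd {t : ℕ} (h4 : 4 ∣ t) (h12 : t ≤ 12) :
    12 * t ≤ t * t + 32 := by
  obtain ⟨k, rfl⟩ := h4
  have hk : k ≤ 3 := by omega
  interval_cases k <;> norm_num

theorem card_oddPart_ne_twelve (h0 : m 0 = 0) (hm3 : ∀ x, m x ≤ 3) (hw : ∀ u, 4 ∣ weight m u)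
    (hsum : ∑ x, m x = 12) : #(oddPart m) ≠ 12 := by
  intro h12
  have hcard := two_mul_card_heavyPart_add_card_oddPart hm3
  have hH : heavyPart m = ∅ := card_eq_zero.1 (by omega)
  set D := Fintype.card (Module.Dual (ZMod 2) V)
  -- With `t = weightOn S u`: `∑ t = 6 D` and `∑ t² = 39 D`, so `t (12 - t)` averages `33`,
  -- while `t ∈ {0, 4, 8, 12}` gives `t (12 - t) ≤ 32`.
  have hquad : ∀ u ∈ univ, 12 * weightOn (oddPart m) u ≤
      weightOn (oddPart m) u * weightOn (oddPart m) u + 32 := fun u _ => by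
    have h4 : 4 ∣ weightOn (oddPart m) u := by
      simpa [weight_eq_two_mul_add hm3, hH, weightOn] using hw u
    exact twelve_mul_le_mul_self_add_of_four_dvd h4 (h12 ▸ card_filter_le _ _)
  have hfirst : 2 * ∑ u, weightOn (oddPart m) u = 12 * D := by
    rw [sum_weightOn_eq, mul_sum, sum_congr rfl fun x hx =>
      two_mul_card_dual_apply_eq_one (ne_zero_of_mem_oddPart h0 hx), sum_const, h12, smul_eq_mul]
  have hsecond : 4 * ∑ u, weightOn (oddPart m) u * weightOn (oddPart m) u = 156 * D := by
    simp_rw [sum_weightOn_mul_eq, sum_weightOn_eq, filter_filter, mul_sum]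
    rw [sum_congr rfl fun x hx => sum_congr rfl fun y hy => four_mul_card_dual_apply_eq_one_and
      (ne_zero_of_mem_oddPart h0 hx) (ne_zero_of_mem_oddPart h0 hy)]
    simp only [sum_add_distrib, sum_const, h12, smul_eq_mul, sum_ite_eq, sum_ite_mem, inter_self]
    ring
  have hsum_le := sum_le_sum hquad
  rw [← mul_sum, sum_add_distrib, sum_const, card_univ, smul_eq_mul] at hsum_le
  have : 0 < D := Fintype.card_pos
  omega

theorem two_dvd_of_forall_four_dvd_weight (h0 : m 0 = 0) (hm3 : ∀ x, m x ≤ 3)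
    (hw : ∀ u, 4 ∣ weight m u) (hsum : ∑ x, m x = 12) (x : V) : 2 ∣ m x := by
  have hS : oddPart m = ∅ := by
    by_contra hne
    have := two_mul_card_heavyPart_add_card_oddPart hm3
    have := eight_le_card_oddPart h0 hm3 hw (by omega) (nonempty_iff_ne_empty.2 hne)
    have := card_oddPart_ne_eight h0 hm3 hw hsum
    have := card_oddPart_ne_ten h0 hm3 hw hsum
    have := card_oddPart_ne_twelve h0 hm3 hw hsum
    omega
  have hx : x ∉ oddPart m := hS ▸ notMem_empty x
  simp only [oddPart, mem_filter, mem_univ, true_and] at hx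
  omega

end Cases

section Halving

variable {F V : Type*} [Field F] [AddCommGroup V] [Module F V] {M : Projectivization F V → ℕ}

theorem MVal_eq_two_mul_MVal_half (heven : ∀ P, 2 ∣ M P) (K : Submodule F V) :
    MVal M K = 2 * MVal (fun P => M P / 2) K := by
  rw [MVal, MVal, mul_finsum_mem]
  exact finsum_mem_congr rfl fun P _ => (Nat.mul_div_cancel' (heven P)).symm

theorem IsDivisible.half {Δ : ℕ} (hdiv : IsDivisible (2 * Δ) M) (heven : ∀ P, 2 ∣ M P) :
    IsDivisible Δ (fun P => M P / 2) := fun H hH =>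
  Nat.ModEq.mul_left_cancel' two_ne_zero <| by
    rw [← MVal_eq_two_mul_MVal_half heven, ← MVal_eq_two_mul_MVal_half heven]
    exact hdiv H hH

end Halving

section Projective

variable {V : Type*} [AddCommGroup V] [Module (ZMod 2) V]

theorem Projectivization.rep_mk_zmod_two {x : V} (hx : x ≠ 0) :
    (Projectivization.mk (ZMod 2) x hx).rep = x := by
  obtain ⟨a, ha⟩ := Projectivization.exists_smul_eq_mk_rep (ZMod 2) x hx
  rw [← ha, Subsingleton.elim a 1, one_smul]

-- Over `𝔽₂` a point has exactly one nonzero representative, so `M` becomes a function on vectors.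
noncomputable def pointMult (M : Projectivization (ZMod 2) V → ℕ) (x : V) : ℕ :=
  if hx : x = 0 then 0 else M (Projectivization.mk (ZMod 2) x hx)

variable {M : Projectivization (ZMod 2) V → ℕ}

theorem pointMult_zero : pointMult M 0 = 0 := dif_pos rfl

theorem pointMult_rep (P : Projectivization (ZMod 2) V) : pointMult M P.rep = M P := by
  rw [pointMult, dif_neg P.rep_nonzero, Projectivization.mk_rep]

theorem pointMult_le {c : ℕ} (hc : ∀ P, M P ≤ c) (x : V) : pointMult M x ≤ c := by
  unfold pointMult
  split_ifs
  exacts [Nat.zero_le c, hc _]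

variable [Fintype V]

theorem MVal_eq_sum_pointMult (K : Submodule (ZMod 2) V) :
    MVal M K = ∑ x with x ∈ K, pointMult M x := by
  have hbij : Set.BijOn Projectivization.rep {P | P.submodule ≤ K}
      ↑({x ∈ {x | x ∈ K} | x ≠ 0} : Finset V) := by
    refine ⟨fun P hP => ?_, fun P _ Q _ h => ?_, fun x hx => ?_⟩
    · simp only [Set.mem_ofPred_eq, Projectivization.submodule_eq,
        Submodule.span_singleton_le_iff_mem] at hP
      simpa [hP] using P.rep_nonzero
    · rw [← P.mk_rep, ← Q.mk_rep]
      simp only [h]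
    · simp only [coe_filter, mem_filter, mem_univ, true_and, Set.mem_ofPred_eq] at hx
      exact ⟨Projectivization.mk (ZMod 2) x hx.2, by
        simp [Projectivization.submodule_mk, Submodule.span_singleton_le_iff_mem, hx.1],
        Projectivization.rep_mk_zmod_two hx.2⟩
  rw [MVal, finsum_mem_eq_of_bijOn _ hbij fun P _ => (pointMult_rep P).symm,
    finsum_mem_coe_finset, sum_filter_of_ne (p := (· ≠ 0)) fun x _ hx h => hx (h ▸ pointMult_zero)]

theorem weight_add_MVal_ker (u : Module.Dual (ZMod 2) V) :
    weight (pointMult M) u + MVal M (LinearMap.ker u) = MVal M ⊤ := by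
  have hker : ∀ x, x ∈ LinearMap.ker u ↔ ¬ u x = 1 := fun x => by
    rw [LinearMap.mem_ker]
    generalize u x = a
    decide +revert
  simp only [weight, MVal_eq_sum_pointMult, hker, Submodule.mem_top, filter_true]
  exact sum_filter_add_sum_filter_not _ _ _

theorem four_dvd_weight_of_isDivisible (hdiv : IsDivisible 4 M) (hcard : 4 ∣ MVal M ⊤)
    (u : Module.Dual (ZMod 2) V) : 4 ∣ weight (pointMult M) u := by
  by_cases hu : u = 0
  · simp [weight, hu]
  · have hH := hdiv _ (Module.Dual.finrank_ker_add_one_of_ne_zero hu)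
    have := weight_add_MVal_ker (M := M) u
    unfold Nat.ModEq at hH
    omega

end Projective

theorem stmt_9 (v : ℕ) (M : Projectivization (ZMod 2) (Fin v → ZMod 2) → ℕ)
    (hdiv : IsDivisible 4 M) (hcard : MVal M ⊤ = 12) (hγ : ∀ P, M P ≤ 3) :
    (∀ P, 2 ∣ M P) ∧ IsDivisible 2 (fun P => M P / 2) ∧
      MVal (fun P => M P / 2) ⊤ = 6 := by
  have : Finite (Module.Dual (ZMod 2) (Fin v → ZMod 2)) := Module.finite_of_finite (ZMod 2)
  let : Fintype (Module.Dual (ZMod 2) (Fin v → ZMod 2)) := Fintype.ofFinite _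
  have hsum : ∑ x, pointMult M x = 12 := by simpa [MVal_eq_sum_pointMult] using hcard
  have hw := four_dvd_weight_of_isDivisible hdiv (by rw [hcard]; norm_num)
  have heven : ∀ P, 2 ∣ M P := fun P => pointMult_rep (M := M) P ▸
    two_dvd_of_forall_four_dvd_weight pointMult_zero (pointMult_le hγ) hw hsum P.rep
  have hhalf := MVal_eq_two_mul_MVal_half heven ⊤
  exact ⟨heven, IsDivisible.half (Δ := 2) hdiv heven, by omega⟩
end
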